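/- Let h₁, h₂ : ℝ → ℝ be convex, nondecreasing, Lipschitz with constants α₁, α₂ ∈ [0,1), and h₁(0) = h₂(0) = 0. Fix t < 0, set y = (t, h₂(t)). Suppose h₁ is C² on an interval (τ, 0] where h₁(s) > t for s ∈ (τ, 0]. Define σ(s) = (h₂(t) − s)/(t − h₁(s)) for s ∈ (τ, 0] (the slope of the line through y and (h₁(s), s)). Then σ is strictly increasing on (τ, 0]. -/

import Mathlib

/-!
Write `σ(s) = (s - h₂ t) / (h₁ s - t)`. Since `h₁` and `h₂` vanish at `0` with Lipschitz constant
below `1`, we have `s ≤ h₁ s` for `s ≤ 0` and `t ≤ h₂ t`, so the numerator of `σ` never exceeds its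
(positive) denominator. Moving from `s₁` to `s₂ > s₁` raises the numerator by `s₂ - s₁` but the
denominator only by `h₁ s₂ - h₁ s₁ ∈ [0, s₂ - s₁)`, which strictly increases the quotient.
-/

open Set

lemma self_le_of_abs_le_mul_abs {x y α : ℝ} (hα : α ≤ 1) (hx : x ≤ 0) (h : |y| ≤ α * |x|) :
    x ≤ y := by
  have hαx : α * |x| ≤ |x| := mul_le_of_le_one_left (abs_nonneg x) hα
  linarith [neg_abs_le y, abs_of_nonpos hx]

lemma self_le_of_lipschitz_of_nonpos {f : ℝ → ℝ} {α : ℝ} (hα : α ≤ 1)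
    (hf : ∀ x y, |f x - f y| ≤ α * |x - y|) (h0 : f 0 = 0) {x : ℝ} (hx : x ≤ 0) : x ≤ f x :=
  self_le_of_abs_le_mul_abs hα hx (by simpa [h0] using hf x 0)

lemma sub_lt_sub_of_lipschitz_lt_one {f : ℝ → ℝ} {α : ℝ} (hα : α < 1)
    (hf : ∀ x y, |f x - f y| ≤ α * |x - y|) {x y : ℝ} (hxy : x < y) : f y - f x < y - x :=
  calc f y - f x ≤ |f y - f x| := le_abs_self _
    _ ≤ α * |y - x| := hf y x
    _ = α * (y - x) := by rw [abs_of_pos (sub_pos.2 hxy)]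
    _ < y - x := mul_lt_of_lt_one_left (sub_pos.2 hxy) hα

lemma strictMonoOn_slope {g : ℝ → ℝ} {S : Set ℝ} {a t : ℝ} (hmono : MonotoneOn g S)
    (hslow : ∀ x ∈ S, ∀ y ∈ S, x < y → g y - g x < y - x)
    (hle : ∀ s ∈ S, s - a ≤ g s - t) (hpos : ∀ s ∈ S, t < g s) :
    StrictMonoOn (fun s => (a - s) / (t - g s)) S := by
  intro s₁ hs₁ s₂ hs₂ h
  have hflip : ∀ s, (a - s) / (t - g s) = (s - a) / (g s - t) := fun s => by
    rw [← neg_div_neg_eq, neg_sub, neg_sub]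
  have hd₁ : 0 < g s₁ - t := sub_pos.2 (hpos s₁ hs₁)
  have hd₂ : 0 < g s₂ - t := sub_pos.2 (hpos s₂ hs₂)
  have hD : 0 ≤ g s₂ - g s₁ := sub_nonneg.2 (hmono hs₁ hs₂ h.le)
  simp only [hflip]
  rw [div_lt_div_iff₀ hd₁ hd₂]
  calc (s₁ - a) * (g s₂ - t) = (s₁ - a) * (g s₁ - t) + (s₁ - a) * (g s₂ - g s₁) := by ring
    _ ≤ (s₁ - a) * (g s₁ - t) + (g s₁ - t) * (g s₂ - g s₁) := by
      gcongr _ + ?_ * _; exact hle s₁ hs₁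
    _ < (s₁ - a) * (g s₁ - t) + (g s₁ - t) * (s₂ - s₁) := by
      gcongr _ + _ * ?_; exact hslow s₁ hs₁ s₂ hs₂ h
    _ = (s₂ - a) * (g s₁ - t) := by ring

theorem slope_function_strictMono_general
    (h₁ h₂ : ℝ → ℝ) (α₁ α₂ : ℝ) (hα₁' : α₁ < 1)
    (hα₂' : α₂ < 1)
    (hm₁ : Monotone h₁)
    (hl₁ : ∀ s t : ℝ, |h₁ s - h₁ t| ≤ α₁ * |s - t|)
    (hl₂ : ∀ s t : ℝ, |h₂ s - h₂ t| ≤ α₂ * |s - t|)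
    (h10 : h₁ 0 = 0) (h20 : h₂ 0 = 0)
    (t τ : ℝ) (ht : t < 0)
    (hgt : ∀ s ∈ Ioc τ (0 : ℝ), t < h₁ s) :
    StrictMonoOn (fun s => (h₂ t - s) / (t - h₁ s)) (Ioc τ (0 : ℝ)) := by
  have ht₂ : t ≤ h₂ t := self_le_of_lipschitz_of_nonpos hα₂'.le hl₂ h20 ht.le
  refine strictMonoOn_slope (hm₁.monotoneOn _)
    (fun x _ y _ hxy => sub_lt_sub_of_lipschitz_lt_one hα₁' hl₁ hxy) (fun s hs => ?_) hgt
  linarith [self_le_of_lipschitz_of_nonpos hα₁'.le hl₁ h10 hs.2]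

/-- monotonicity of the slope function
`σ(s) = (h₂ t − s)/(t − h₁ s)` on `(τ, 0]`. -/
theorem slope_function_strictMono
    (h₁ h₂ : ℝ → ℝ) (α₁ α₂ : ℝ) (hα₁ : 0 ≤ α₁) (hα₁' : α₁ < 1)
    (hα₂ : 0 ≤ α₂) (hα₂' : α₂ < 1)
    (hc₁ : ConvexOn ℝ univ h₁) (hc₂ : ConvexOn ℝ univ h₂)
    (hm₁ : Monotone h₁) (hm₂ : Monotone h₂)
    (hl₁ : ∀ s t : ℝ, |h₁ s - h₁ t| ≤ α₁ * |s - t|)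
    (hl₂ : ∀ s t : ℝ, |h₂ s - h₂ t| ≤ α₂ * |s - t|)
    (h10 : h₁ 0 = 0) (h20 : h₂ 0 = 0)
    (t τ : ℝ) (ht : t < 0) (hτ : τ < 0)
    (hgt : ∀ s ∈ Ioc τ (0 : ℝ), t < h₁ s)
    (hsmooth : ContDiffOn ℝ 2 h₁ (Ioc τ (0 : ℝ))) :
    StrictMonoOn (fun s => (h₂ t - s) / (t - h₁ s)) (Ioc τ (0 : ℝ)) :=
  slope_function_strictMono_general h₁ h₂ α₁ α₂ hα₁' hα₂' hm₁ hl₁ hl₂ h10 h20 t τ ht hgt
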